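/- arXiv:2405.18138 — 2 statements merged into one kernel-verified Lean document; each statement's English description precedes it below -/
import Mathlib

section
/- Let E ⊆ ℝ^N be a bounded measurable set with |E| = 1, barycenter at the origin, and diameter at most D. Suppose B is a ball of volume 1 centered at a point whose distance from the hyperplane {x₁ = 0} equals d. Then (ω_N^{(N−1)/N}/ω_{N−1}) · ||B ∩ {x₁>0}| − 1/2| ≤ d ≤ D |E Δ B|. -/
open MeasureTheory Metric Set ENNReal

noncomputable section

abbrev En (N : ℕ) := EuclideanSpace ℝ (Fin N)

/-- The volume of the unit ball in `ℝ^N`. -/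
def omegaB (N : ℕ) : ℝ := (volume (Metric.ball (0 : En N) 1)).toReal

/-- The divergence of a vector field on `ℝ^N`. -/
def divg {N : ℕ} (φ : En N → En N) (x : En N) : ℝ :=
  ∑ i, fderiv ℝ φ x (EuclideanSpace.single i (1 : ℝ)) i

/-- The set of candidate values in the sup defining the distributional perimeter of `E`. -/
def perSet {N : ℕ} (E : Set (En N)) : Set ℝ :=
  {p | ∃ φ : En N → En N, ContDiff ℝ 1 φ ∧ HasCompactSupport φ ∧
    (∀ x, ‖φ x‖ ≤ 1) ∧ p = ∫ x in E, divg φ x}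

/-- The distributional (De Giorgi) perimeter of `E`. -/
def perimeter {N : ℕ} (E : Set (En N)) : ℝ := sSup (perSet E)

/-- `E` has finite perimeter. -/
def HasFinitePerimeter {N : ℕ} (E : Set (En N)) : Prop := BddAbove (perSet E)

/-- The essential diameter of `E`. -/
def essDiam {N : ℕ} (E : Set (En N)) : ℝ≥0∞ :=
  sInf {d : ℝ≥0∞ |
    (volume.prod volume) {p : En N × En N | p.1 ∈ E ∧ p.2 ∈ E ∧ d < edist p.1 p.2} = 0}

/-- The barycenter of `E`. -/
def bary {N : ℕ} (E : Set (En N)) : En N := ((volume E).toReal)⁻¹ • ∫ x in E, x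

/-- The radius of the ball having the same volume as `E`. -/
def ballRad {N : ℕ} (E : Set (En N)) : ℝ := ((volume E).toReal / omegaB N) ^ (1 / (N : ℝ))

/-- The barycentric asymmetry `λ₀(E)`. -/
def lam0 {N : ℕ} (E : Set (En N)) : ℝ :=
  (volume (symmDiff E (Metric.ball (bary E) (ballRad E)))).toReal / (volume E).toReal

/-- The Fraenkel asymmetry `λ(E)`. -/
def fraenkel {N : ℕ} (E : Set (En N)) : ℝ :=
  ⨅ y : En N, (volume (symmDiff E (Metric.ball y (ballRad E)))).toReal / (volume E).toReal

/-- The isoperimetric deficit `δ(E)`. -/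
def deficit {N : ℕ} (E : Set (En N)) : ℝ :=
  (perimeter E - perimeter (Metric.ball (0 : En N) (ballRad E))) /
    perimeter (Metric.ball (0 : En N) (ballRad E))

/-- Measure-theoretic connectedness. -/
def MConnected {N : ℕ} (E : Set (En N)) : Prop :=
  ∀ F : Set (En N), MeasurableSet F → F ⊆ E → 0 < volume F → volume F < volume E →
    perimeter E < perimeter F + perimeter (E \ F)

/-!
Second inequality: a ball is invariant under the point reflection `x ↦ 2c - x` about its centre,
so its barycenter is `c`. Hence `c = ∫_B x - ∫_E x = ∫_{B \ E} x - ∫_{E \ B} x`, and `|x| ≤ D`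
on both sets.

First inequality: by the same reflection `|B ∩ {x₁ > c₁}| = 1/2`. Moving the cut from `c₁` to
`0` changes the volume by that of a slab of width `|c₁|` in `B`, which is at most
`|c₁| r^{N-1} ω_{N-1}`, and `ω_N^{(N-1)/N} r^{N-1} = 1` because `|B| = r^N ω_N = 1`.
-/

theorem rpow_div_mul_pow_eq_one {ω r : ℝ} (hω : 0 ≤ ω) (hr : 0 ≤ r) {n : ℕ}
    (h : r ^ (n + 1) * ω = 1) : ω ^ ((n : ℝ) / (n + 1)) * r ^ n = 1 := by
  have hpow : r ^ n = (r ^ (n + 1)) ^ ((n : ℝ) / (n + 1)) := by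
    rw [← Real.rpow_natCast r (n + 1), ← Real.rpow_mul hr, ← Real.rpow_natCast]
    congr 1
    push_cast
    field_simp
  rw [hpow, ← Real.mul_rpow hω (by positivity), mul_comm, h, Real.one_rpow]

theorem norm_setIntegral_sub_setIntegral_le {X F : Type*} [MeasurableSpace X]
    [NormedAddCommGroup F] [NormedSpace ℝ F] {μ : Measure X} {f : X → F} {s t : Set X} {C : ℝ}
    (hs : MeasurableSet s) (ht : MeasurableSet t) (hμs : μ s ≠ ∞) (hμt : μ t ≠ ∞)
    (hf : IntegrableOn f (s ∪ t) μ) (hC : ∀ x ∈ s ∪ t, ‖f x‖ ≤ C) :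
    ‖∫ x in s, f x ∂μ - ∫ x in t, f x ∂μ‖ ≤ C * μ.real (symmDiff s t) := by
  have hsplit : ∫ x in s, f x ∂μ - ∫ x in t, f x ∂μ
      = ∫ x in s \ t, f x ∂μ - ∫ x in t \ s, f x ∂μ := by
    rw [← integral_inter_add_sdiff ht (hf.mono_set subset_union_left),
      ← integral_inter_add_sdiff hs (hf.mono_set subset_union_right), inter_comm]
    abel
  have hbound : ∀ u ⊆ s ∪ t, μ u < ∞ → ‖∫ x in u, f x ∂μ‖ ≤ C * μ.real u := fun u hu hμu =>
    norm_setIntegral_le_of_norm_le_const hμu fun x hx => hC x (hu hx)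
  calc ‖∫ x in s, f x ∂μ - ∫ x in t, f x ∂μ‖
      ≤ ‖∫ x in s \ t, f x ∂μ‖ + ‖∫ x in t \ s, f x ∂μ‖ := hsplit ▸ norm_sub_le _ _
    _ ≤ C * μ.real (s \ t) + C * μ.real (t \ s) := by
      gcongr
      · exact hbound _ (sdiff_subset.trans subset_union_left)
          (measure_lt_top_of_subset sdiff_subset hμs)
      · exact hbound _ (sdiff_subset.trans subset_union_right)
          (measure_lt_top_of_subset sdiff_subset hμt)
    _ = C * μ.real (symmDiff s t) := by rw [measureReal_symmDiff_eq hs ht hμs hμt, mul_add]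

theorem preimage_two_smul_sub_ball {E : Type*} [NormedAddCommGroup E] [Module ℝ E] (c : E)
    (r : ℝ) : (fun x => (2 : ℝ) • c - x) ⁻¹' ball c r = ball c r := by
  ext x
  simp [two_smul, dist_eq_norm, add_sub_assoc, norm_sub_rev]

theorem setIntegral_ball_id {E : Type*} [NormedAddCommGroup E] [NormedSpace ℝ E]
    [MeasurableSpace E] [BorelSpace E] [FiniteDimensional ℝ E] (μ : Measure E)
    [μ.IsAddHaarMeasure] (c : E) (r : ℝ) :
    ∫ x in ball c r, x ∂μ = μ.real (ball c r) • c := by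
  have hint : IntegrableOn (fun x : E => x) (ball c r) μ :=
    (continuous_id.locallyIntegrable.integrableOn_isCompact (isCompact_closedBall c r)).mono_set
      ball_subset_closedBall
  have hsymm := (Measure.measurePreserving_sub_left μ ((2 : ℝ) • c)).setIntegral_preimage_emb
    (MeasurableEquiv.subLeft _).measurableEmbedding id (ball c r)
  have hconst : IntegrableOn (fun _ => (2 : ℝ) • c) (ball c r) μ :=
    integrableOn_const measure_ball_lt_top.ne
  simp only [preimage_two_smul_sub_ball, id] at hsymm
  rw [integral_sub hconst hint, setIntegral_const] at hsymm
  linear_combination (norm := module) (-2⁻¹ : ℝ) • hsymm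

def coordSplit {n : ℕ} (i : Fin (n + 1)) : En (n + 1) ≃ᵐ ℝ × En n :=
  (MeasurableEquiv.toLp 2 (Fin (n + 1) → ℝ)).symm.trans
    ((MeasurableEquiv.piFinSuccAbove (fun _ => ℝ) i).trans
      ((MeasurableEquiv.refl ℝ).prodCongr (MeasurableEquiv.toLp 2 (Fin n → ℝ))))

section Coordinates

variable {n : ℕ} (i : Fin (n + 1))

theorem coordSplit_apply (x : En (n + 1)) :
    coordSplit i x = (x i, WithLp.toLp 2 fun j => x (i.succAbove j)) := rfl

theorem measurePreserving_coordSplit : MeasurePreserving (coordSplit i) := by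
  rw [Measure.volume_eq_prod]
  exact (((MeasurePreserving.id volume).prod (PiLp.volume_preserving_toLp (Fin n))).comp
    (volume_preserving_piFinSuccAbove (fun _ => ℝ) i)).comp
    (EuclideanSpace.volume_preserving_symm_measurableEquiv_toLp (Fin (n + 1)))

theorem dist_coordSplit_snd_le (x y : En (n + 1)) :
    dist (coordSplit i x).2 (coordSplit i y).2 ≤ dist x y := by
  simp only [coordSplit_apply, EuclideanSpace.dist_eq]
  gcongr
  rw [Fin.sum_univ_succAbove _ i]
  exact le_add_of_nonneg_left (sq_nonneg _)

theorem volume_setOf_coord_eq (a : ℝ) : volume {x : En (n + 1) | x i = a} = 0 := by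
  have hpre : {x : En (n + 1) | x i = a} = coordSplit i ⁻¹' ({a} ×ˢ univ) := by
    ext x
    simp [coordSplit_apply]
  rw [hpre, (measurePreserving_coordSplit i).measure_preimage
    ((measurableSet_singleton a).prod MeasurableSet.univ).nullMeasurableSet,
    Measure.volume_eq_prod, Measure.prod_prod, Real.volume_singleton, zero_mul]

theorem measureReal_ball_inter_coord_mem_Ioc_le (c : En (n + 1)) (r : ℝ) {l u : ℝ} (hlu : l ≤ u) :
    volume.real (ball c r ∩ {x | x i ∈ Ioc l u}) ≤ (u - l) * volume.real (ball (0 : En n) r) := by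
  have hsub : ball c r ∩ {x | x i ∈ Ioc l u}
      ⊆ coordSplit i ⁻¹' (Ioc l u ×ˢ ball (coordSplit i c).2 r) :=
    fun x ⟨hx, hxi⟩ => ⟨hxi, (dist_coordSplit_snd_le i x c).trans_lt hx⟩
  have hvol : volume (coordSplit i ⁻¹' (Ioc l u ×ˢ ball (coordSplit i c).2 r))
      = ENNReal.ofReal (u - l) * volume (ball (0 : En n) r) := by
    rw [(measurePreserving_coordSplit i).measure_preimage
      (measurableSet_Ioc.prod measurableSet_ball).nullMeasurableSet,
      Measure.volume_eq_prod, Measure.prod_prod, Real.volume_Ioc, Measure.addHaar_ball_center]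
  calc volume.real (ball c r ∩ {x | x i ∈ Ioc l u})
      ≤ (ENNReal.ofReal (u - l) * volume (ball (0 : En n) r)).toReal :=
        ENNReal.toReal_mono (by finiteness) (hvol ▸ measure_mono hsub)
    _ = (u - l) * volume.real (ball (0 : En n) r) := by
        rw [ENNReal.toReal_mul, ENNReal.toReal_ofReal (sub_nonneg.2 hlu), measureReal_def]

theorem measureReal_ball_inter_center_lt (c : En (n + 1)) (r : ℝ) :
    volume.real (ball c r ∩ {x | c i < x i}) = volume.real (ball c r) / 2 := by
  have hmeas : MeasurableSet {x : En (n + 1) | c i < x i} :=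
    measurableSet_lt measurable_const (by fun_prop)
  have hreflect : volume.real (ball c r ∩ {x | x i < c i})
      = volume.real (ball c r ∩ {x | c i < x i}) := by
    have hpre : (fun x => (2 : ℝ) • c - x) ⁻¹' (ball c r ∩ {x | c i < x i})
        = ball c r ∩ {x | x i < c i} := by
      rw [preimage_inter, preimage_two_smul_sub_ball]
      ext x
      simp only [mem_inter_iff, mem_preimage, mem_ofPred_eq, PiLp.sub_apply, PiLp.smul_apply,
        smul_eq_mul]
      constructor <;> rintro ⟨h, h'⟩ <;> exact ⟨h, by linarith⟩
    rw [← hpre, measureReal_def, measureReal_def,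
      (Measure.measurePreserving_sub_left volume _).measure_preimage
        (measurableSet_ball.inter hmeas).nullMeasurableSet]
  have hhyperplane : (ball c r \ {x | c i < x i} : Set (En (n + 1)))
      =ᵐ[volume] (ball c r ∩ {x | x i < c i} : Set (En (n + 1))) := by
    have hsplit : ball c r \ {x | c i < x i}
        = ball c r ∩ {x | x i < c i} ∪ ball c r ∩ {x | x i = c i} := by
      ext x
      simp only [mem_sdiff, mem_inter_iff, mem_union, mem_ofPred_eq, not_lt]
      constructor
      · rintro ⟨h, h'⟩
        exact h'.lt_or_eq.imp (⟨h, ·⟩) (⟨h, ·⟩)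
      · rintro (⟨h, h'⟩ | ⟨h, h'⟩) <;> exact ⟨h, by linarith⟩
    rw [hsplit]
    exact union_ae_eq_left_of_ae_eq_empty
      (ae_eq_empty.2 (measure_mono_null inter_subset_right (volume_setOf_coord_eq i _)))
  have hsum := measureReal_inter_add_sdiff (μ := volume) (s := ball c r) hmeas
  rw [measureReal_congr hhyperplane, hreflect] at hsum
  linarith

theorem abs_measureReal_ball_inter_lt_sub_le (c : En (n + 1)) (r s t : ℝ) :
    |volume.real (ball c r ∩ {x | s < x i}) - volume.real (ball c r ∩ {x | t < x i})|
      ≤ |s - t| * volume.real (ball (0 : En n) r) := by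
  wlog hst : s ≤ t generalizing s t
  · rw [abs_sub_comm, abs_sub_comm s]
    exact this t s (le_of_not_ge hst)
  have hmono : ball c r ∩ {x | t < x i} ⊆ ball c r ∩ {x | s < x i} :=
    inter_subset_inter_right _ fun x hx => hst.trans_lt hx
  have hdiff : (ball c r ∩ {x | s < x i}) \ (ball c r ∩ {x | t < x i})
      = ball c r ∩ {x | x i ∈ Ioc s t} := by
    ext x
    simp only [mem_sdiff, mem_inter_iff, mem_ofPred_eq, mem_Ioc, not_and, not_lt]
    constructor
    · rintro ⟨⟨h, hs⟩, ht⟩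
      exact ⟨h, hs, ht h⟩
    · rintro ⟨h, hs, ht⟩
      exact ⟨⟨h, hs⟩, fun _ => ht⟩
  rw [← measureReal_sdiff hmono (measurableSet_ball.inter
      (measurableSet_lt measurable_const (by fun_prop))), hdiff,
    abs_of_nonneg measureReal_nonneg, abs_of_nonpos (sub_nonpos.2 hst), neg_sub]
  exact measureReal_ball_inter_coord_mem_Ioc_le i c r hst

end Coordinates

theorem omegaB_pos (n : ℕ) : 0 < omegaB n :=
  ENNReal.toReal_pos (measure_ball_pos volume (0 : En n) one_pos).ne' measure_ball_lt_top.ne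

theorem measureReal_ball_eq {n : ℕ} (c : En n) {r : ℝ} (hr : 0 < r) :
    volume.real (ball c r) = r ^ n * omegaB n := by
  rw [measureReal_def, Measure.addHaar_ball_of_pos _ _ hr, ENNReal.toReal_mul,
    ENNReal.toReal_ofReal (by positivity), finrank_euclideanSpace_fin, omegaB]

theorem abs_measureReal_ball_inter_pos_sub_half_le {n : ℕ} (i : Fin (n + 1)) (c : En (n + 1))
    {r : ℝ} (hB : volume (ball c r) = 1) :
    omegaB (n + 1) ^ ((n : ℝ) / (n + 1)) / omegaB n *
      |volume.real (ball c r ∩ {x | 0 < x i}) - 1 / 2| ≤ |c i| := by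
  have hr : 0 < r := nonempty_ball.1 (nonempty_of_measure_ne_zero (hB ▸ one_ne_zero))
  have hunit : omegaB (n + 1) ^ ((n : ℝ) / (n + 1)) * r ^ n = 1 :=
    rpow_div_mul_pow_eq_one (omegaB_pos _).le hr.le
      (by rw [← measureReal_ball_eq c hr, measureReal_def, hB, ENNReal.toReal_one])
  have hhalf : volume.real (ball c r ∩ {x | c i < x i}) = 1 / 2 := by
    rw [measureReal_ball_inter_center_lt, measureReal_def, hB, ENNReal.toReal_one]
  have hlip := abs_measureReal_ball_inter_lt_sub_le i c r 0 (c i)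
  rw [hhalf, zero_sub, abs_neg, measureReal_ball_eq 0 hr] at hlip
  have hω := omegaB_pos n
  calc omegaB (n + 1) ^ ((n : ℝ) / (n + 1)) / omegaB n *
        |volume.real (ball c r ∩ {x | 0 < x i}) - 1 / 2|
      ≤ omegaB (n + 1) ^ ((n : ℝ) / (n + 1)) / omegaB n * (|c i| * (r ^ n * omegaB n)) :=
        mul_le_mul_of_nonneg_left hlip (div_nonneg (Real.rpow_nonneg (omegaB_pos _).le _) hω.le)
    _ = |c i| * (omegaB (n + 1) ^ ((n : ℝ) / (n + 1)) * r ^ n) := by field_simp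
    _ = |c i| := by rw [hunit, mul_one]

theorem dist_center_le_symmDiff_general {N : ℕ} (hN : 0 < N) (E : Set (En N))
    (hmeas : MeasurableSet E)
    (hbar : (∫ x in E, x) = (0 : En N))
    (D : ℝ)
    (c : En N) (r d : ℝ) (hB : volume (Metric.ball c r) = 1) (hd : d = |c ⟨0, hN⟩|)
    (hsub : E ∪ Metric.ball c r ⊆ Metric.ball (0 : En N) D) :
    (omegaB N) ^ (((N : ℝ) - 1) / N) / omegaB (N - 1) *
        |(volume (Metric.ball c r ∩ {x : En N | 0 < x ⟨0, hN⟩})).toReal - 1/2| ≤ d ∧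
      d ≤ D * (volume (symmDiff E (Metric.ball c r))).toReal := by
  obtain ⟨n, rfl⟩ : ∃ n, N = n + 1 := ⟨N - 1, (Nat.succ_pred_eq_of_pos hN).symm⟩
  have hexp : ((↑(n + 1) : ℝ) - 1) / ↑(n + 1) = (n : ℝ) / (n + 1) := by push_cast; ring
  constructor
  · rw [hexp, hd]
    exact abs_measureReal_ball_inter_pos_sub_half_le _ c hB
  have hsubBall : ball c r ∪ E ⊆ closedBall 0 D :=
    union_comm E _ ▸ hsub.trans ball_subset_closedBall
  have hc : (∫ x in ball c r, x) - ∫ x in E, x = c := by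
    rw [setIntegral_ball_id, hbar, measureReal_def, hB, ENNReal.toReal_one, one_smul, sub_zero]
  calc d = |c ⟨0, hN⟩| := hd
    _ ≤ ‖c‖ := PiLp.norm_apply_le c _
    _ = ‖(∫ x in ball c r, x) - ∫ x in E, x‖ := by rw [hc]
    _ ≤ D * volume.real (symmDiff (ball c r) E) := norm_setIntegral_sub_setIntegral_le
        measurableSet_ball hmeas measure_ball_lt_top.ne
        (measure_ne_top_of_subset (subset_union_left.trans hsub) measure_ball_lt_top.ne)
        ((continuous_id.locallyIntegrable.integrableOn_isCompact
          (isCompact_closedBall 0 D)).mono_set hsubBall)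
        (fun x hx => mem_closedBall_zero_iff.1 (hsubBall hx))
    _ = D * (volume (symmDiff E (ball c r))).toReal := by rw [symmDiff_comm, measureReal_def]

/-- If `E` has unit volume, barycenter at the origin and diameter at most `D`,
and `B` is a unit-volume ball centered at distance `d` from `{x₁ = 0}` (with `E ∪ B` inside
the ball of radius `D` about the origin), then
`(ω_N^{(N-1)/N}/ω_{N-1}) ||B ∩ {x₁>0}| - 1/2| ≤ d ≤ D |E Δ B|`. -/
theorem dist_center_le_symmDiff {N : ℕ} (hN : 0 < N) (E : Set (En N))
    (hmeas : MeasurableSet E) (hEb : Bornology.IsBounded E)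
    (hvol : volume E = 1) (hbar : (∫ x in E, x) = (0 : En N))
    (D : ℝ) (hdiam : Metric.diam E ≤ D)
    (c : En N) (r d : ℝ) (hB : volume (Metric.ball c r) = 1) (hd : d = |c ⟨0, hN⟩|)
    (hsub : E ∪ Metric.ball c r ⊆ Metric.ball (0 : En N) D) :
    (omegaB N) ^ (((N : ℝ) - 1) / N) / omegaB (N - 1) *
        |(volume (Metric.ball c r ∩ {x : En N | 0 < x ⟨0, hN⟩})).toReal - 1/2| ≤ d ∧
      d ≤ D * (volume (symmDiff E (Metric.ball c r))).toReal :=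
  dist_center_le_symmDiff_general hN E hmeas hbar D c r d hB hd hsub
end
end

section
/- Let E ⊆ ℝ^N be an N-symmetric set of finite positive measure, symmetric with respect to each coordinate hyperplane {x_i = 0}, 1 ≤ i ≤ N. Then the barycenter of E is the origin, and λ(E) ≤ λ₀(E) ≤ 2^N λ(E), where λ is the Fraenkel asymmetry and λ₀ the barycentric asymmetry. -/
open MeasureTheory Metric Set ENNReal

noncomputable section

/-! The reflection `σᵢ` in `{xᵢ = 0}` preserves `E`, so a ball `B = B(y, r)` and its mirror image
`σᵢ B` miss the same measure of `E`. The ball centred at the midpoint of `y` and `σᵢ y` (that is, `y`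
with its `i`-th coordinate set to `0`) contains `B ∩ σᵢ B`, hence misses at most twice as much.
Zeroing the `N` coordinates one at a time moves the centre to the origin at cost `2 ^ N`, and
`|E Δ B| = 2 |E \ B|` as soon as `|B| = |E|`. The barycentre vanishes because `∫_E x` is fixed by
every `σᵢ`. -/

open scoped symmDiff

section
variable {V : Type*} [NormedAddCommGroup V] [NormedSpace ℝ V]

lemma ball_inter_ball_subset_ball_midpoint (y z : V) (r : ℝ) :
    ball y r ∩ ball z r ⊆ ball (midpoint ℝ y z) r := by
  rintro x ⟨hy, hz⟩
  rw [mem_ball_comm] at hy hz ⊢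
  exact (convex_ball x r).midpoint_mem hy hz

lemma measure_sdiff_ball_midpoint_le [MeasurableSpace V] [BorelSpace V] {μ : Measure V}
    (σ : V ≃ᵢ V) (hσ : MeasurePreserving σ μ μ) {s : Set V} (hs : σ ⁻¹' s = s) (y : V) (r : ℝ) :
    μ (s \ ball (midpoint ℝ y (σ y)) r) ≤ 2 * μ (s \ ball y r) := by
  have hmirror : σ ⁻¹' (s \ ball (σ y) r) = s \ ball y r := by
    rw [preimage_sdiff, hs, σ.preimage_ball, σ.symm_apply_apply]
  calc μ (s \ ball (midpoint ℝ y (σ y)) r)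
      ≤ μ ((s \ ball y r) ∪ (s \ ball (σ y) r)) := by
        refine measure_mono ?_
        rw [← sdiff_inter]
        exact sdiff_subset_sdiff_right (ball_inter_ball_subset_ball_midpoint _ _ _)
    _ ≤ μ (s \ ball y r) + μ (s \ ball (σ y) r) := measure_union_le _ _
    _ = 2 * μ (s \ ball y r) := by
        rw [← hmirror, hσ.measure_preimage_emb σ.toHomeomorph.measurableEmbedding, two_mul]

lemma LinearIsometryEquiv.map_setIntegral_id_of_preimage_eq [CompleteSpace V] [MeasurableSpace V]
    [BorelSpace V] {μ : Measure V} (σ : V ≃ₗᵢ[ℝ] V) (hσ : MeasurePreserving σ μ μ) {s : Set V}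
    (hs : σ ⁻¹' s = s) :
    σ (∫ x in s, x ∂μ) = ∫ x in s, x ∂μ := by
  calc σ (∫ x in s, x ∂μ) = ∫ x in s, σ x ∂μ := (σ.toLinearIsometry.integral_comp_comm id).symm
    _ = ∫ x in σ ⁻¹' s, σ x ∂μ := by rw [hs]
    _ = ∫ x in s, x ∂μ := hσ.setIntegral_preimage_emb σ.toHomeomorph.measurableEmbedding id s

end

lemma measure_symmDiff_eq_two_mul_measure_sdiff {α : Type*} [MeasurableSpace α] {μ : Measure α}
    {s t : Set α} (hs : MeasurableSet s) (ht : MeasurableSet t) (hμ : μ t = μ s) (hfin : μ s ≠ ∞) :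
    μ (s ∆ t) = 2 * μ (s \ t) := by
  have hinter : μ (s ∩ t) ≠ ∞ := measure_ne_top_of_subset inter_subset_left hfin
  have hsdiff : μ (t \ s) = μ (s \ t) := by
    refine (ENNReal.add_left_inj hinter).1 ?_
    rw [measure_sdiff_add_inter s ht, inter_comm, measure_sdiff_add_inter t hs, hμ]
  rw [measure_symmDiff_eq hs.nullMeasurableSet ht.nullMeasurableSet, hsdiff, two_mul]

section CoordReflection
variable {N : ℕ}

def coordReflection (i : Fin N) : En N ≃ₗᵢ[ℝ] En N :=
  LinearIsometryEquiv.piLpCongrRight 2 fun j => if j = i then .neg ℝ else .refl ℝ ℝ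

lemma coordReflection_apply (i : Fin N) (x : En N) :
    coordReflection i x = WithLp.toLp 2 (Function.update x i (-x i)) := by
  ext j
  rcases eq_or_ne j i with rfl | hj
  · simp [coordReflection]
  · simp [coordReflection, hj]

lemma coordReflection_involutive (i : Fin N) : Function.Involutive (coordReflection i) := by
  intro x
  ext j
  rcases eq_or_ne j i with rfl | hj <;> simp [coordReflection_apply, *]

lemma midpoint_coordReflection (i : Fin N) (y : En N) :
    midpoint ℝ y (coordReflection i y) = WithLp.toLp 2 (Function.update y i 0) := by
  ext j
  rcases eq_or_ne j i with rfl | hj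
  · simp [midpoint_eq_smul_add, coordReflection_apply]
  · simp [midpoint_eq_smul_add, coordReflection_apply, hj]
    ring

lemma exists_measure_sdiff_ball_le {E : Set (En N)} (hE : ∀ i, coordReflection i ⁻¹' E = E)
    (y : En N) (r : ℝ) (s : Finset (Fin N)) :
    ∃ z : En N, (∀ j ∈ s, z j = 0) ∧
      volume (E \ ball z r) ≤ 2 ^ s.card * volume (E \ ball y r) := by
  induction s using Finset.induction_on with
  | empty => exact ⟨y, by simp, by simp⟩
  | insert i s hi ih =>
    obtain ⟨z, hz0, hz⟩ := ih
    refine ⟨midpoint ℝ z (coordReflection i z), fun j hj => ?_, ?_⟩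
    · rw [midpoint_coordReflection]
      rcases Finset.mem_insert.1 hj with rfl | hj
      · simp
      · simp [Function.update_apply, hz0 j hj]
    · calc volume (E \ ball (midpoint ℝ z (coordReflection i z)) r)
          ≤ 2 * volume (E \ ball z r) :=
            measure_sdiff_ball_midpoint_le (coordReflection i).toIsometryEquiv
              (coordReflection i).measurePreserving (hE i) z r
        _ ≤ 2 * (2 ^ s.card * volume (E \ ball y r)) := by gcongr
        _ = 2 ^ (insert i s).card * volume (E \ ball y r) := by
            rw [Finset.card_insert_of_notMem hi, pow_succ, mul_comm _ (2 : ℝ≥0∞), mul_assoc]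

lemma volume_symmDiff_ball_zero_le {E : Set (En N)} (hmeas : MeasurableSet E)
    (hE : ∀ i, coordReflection i ⁻¹' E = E) (hfin : volume E ≠ ∞) {r : ℝ}
    (hr : volume (ball (0 : En N) r) = volume E) (y : En N) :
    volume (E ∆ ball 0 r) ≤ 2 ^ N * volume (E ∆ ball y r) := by
  have hball (z : En N) : volume (ball z r) = volume E := by
    rw [Measure.addHaar_ball_center, hr]
  obtain ⟨z, hz0, hz⟩ := exists_measure_sdiff_ball_le hE y r Finset.univ
  obtain rfl : z = 0 := by
    ext j
    exact hz0 j (Finset.mem_univ j)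
  rw [Finset.card_univ, Fintype.card_fin] at hz
  rw [measure_symmDiff_eq_two_mul_measure_sdiff hmeas measurableSet_ball (hball 0) hfin,
    measure_symmDiff_eq_two_mul_measure_sdiff hmeas measurableSet_ball (hball y) hfin,
    mul_left_comm]
  gcongr

lemma setIntegral_id_eq_zero_of_coordReflection {E : Set (En N)}
    (hE : ∀ i, coordReflection i ⁻¹' E = E) :
    ∫ x in E, x = 0 := by
  ext i
  have h := congrArg (· i) ((coordReflection i).map_setIntegral_id_of_preimage_eq
    (coordReflection i).measurePreserving (hE i))
  simp only [coordReflection_apply, PiLp.toLp_apply, Function.update_self] at h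
  simp only [PiLp.zero_apply]
  linarith

end CoordReflection

lemma volume_ball_ballRad {N : ℕ} {E : Set (En N)} (h0 : 0 < volume E) (hfin : volume E ≠ ∞) :
    volume (ball (0 : En N) (ballRad E)) = volume E := by
  rcases Nat.eq_zero_or_pos N with rfl | hN
  -- `En 0` is a point and `ballRad E = x ^ (1 / 0) = 1`, so both sides are the mass of `univ`.
  · obtain ⟨x, hx⟩ := nonempty_of_measure_ne_zero h0.ne'
    have hE : E = univ := eq_univ_of_forall fun z => Subsingleton.elim x z ▸ hx
    have hball : ball (0 : En 0) (ballRad E) = univ :=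
      eq_univ_of_forall fun z => by simp [ballRad, Subsingleton.elim z 0]
    rw [hball, hE]
  · have : NeZero N := ⟨hN.ne'⟩
    have hω : 0 < omegaB N :=
      ENNReal.toReal_pos (measure_ball_pos _ _ one_pos).ne' measure_ball_lt_top.ne
    have hpow : ballRad E ^ N = (volume E).toReal / omegaB N := by
      rw [ballRad, one_div]
      exact Real.rpow_inv_natCast_pow (by positivity) hN.ne'
    rw [Measure.addHaar_ball _ _ (r := ballRad E) (Real.rpow_nonneg (by positivity) _),
      finrank_euclideanSpace_fin, hpow, ← ENNReal.ofReal_toReal (a := volume (ball (0 : En N) 1)) measure_ball_lt_top.ne,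
      ← ENNReal.ofReal_mul (by positivity), ← omegaB, div_mul_cancel₀ _ hω.ne',
      ENNReal.ofReal_toReal hfin]

theorem nsymmetric_asymmetry_general {N : ℕ} (E : Set (En N)) (hmeas : MeasurableSet E)
    (h0 : 0 < volume E) (hfin : volume E ≠ ⊤)
    (hsym : ∀ i : Fin N,
      (fun x : En N => (WithLp.toLp 2 (Function.update x i (-(x i))) : En N)) '' E = E) :
    bary E = 0 ∧ fraenkel E ≤ lam0 E ∧ lam0 E ≤ 2 ^ N * fraenkel E := by
  have hE (i : Fin N) : coordReflection i ⁻¹' E = E := by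
    have hσ : ⇑(coordReflection i) =
        fun x : En N => (WithLp.toLp 2 (Function.update x i (-(x i))) : En N) :=
      funext fun x => coordReflection_apply i x
    rw [← (coordReflection_involutive i).image_eq_preimage_symm, hσ, hsym i]
  have hbary : bary E = 0 := by
    rw [bary, setIntegral_id_eq_zero_of_coordReflection hE, smul_zero]
  refine ⟨hbary, ?_, ?_⟩
  · rw [lam0, hbary]
    exact ciInf_le ⟨0, by rintro _ ⟨y, rfl⟩; positivity⟩ 0
  · rw [fraenkel, Real.mul_iInf_of_nonneg (by positivity)]
    refine le_ciInf fun y => ?_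
    rw [lam0, hbary, ← mul_div_assoc]
    gcongr
    have h := volume_symmDiff_ball_zero_le hmeas hE hfin (volume_ball_ballRad h0 hfin) y
    have hne : volume (E ∆ ball y (ballRad E)) ≠ ∞ :=
      measure_symmDiff_ne_top hfin measure_ball_lt_top.ne
    simpa using ENNReal.toReal_mono (ENNReal.mul_ne_top (by simp) hne) h

/-- An `N`-symmetric set (symmetric w.r.t. every coordinate hyperplane) has
barycenter at the origin and satisfies `λ(E) ≤ λ₀(E) ≤ 2^N λ(E)`. -/
theorem nsymmetric_asymmetry {N : ℕ} (E : Set (En N)) (hmeas : MeasurableSet E)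
    (hb : Bornology.IsBounded E) (h0 : 0 < volume E) (hfin : volume E ≠ ⊤)
    (hsym : ∀ i : Fin N,
      (fun x : En N => (WithLp.toLp 2 (Function.update x i (-(x i))) : En N)) '' E = E) :
    bary E = 0 ∧ fraenkel E ≤ lam0 E ∧ lam0 E ≤ 2 ^ N * fraenkel E :=
  nsymmetric_asymmetry_general E hmeas h0 hfin hsym
end
end
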